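/- Let f₁, f₂ : V × V' → ℝ ∪ {+∞} be lower semicontinuous convex functions with f_i(v, v') ≥ ⟨v', v⟩ for all (v, v'). Then the set α := { (v, v') : f₁(v, v') = ⟨v', v⟩ } defines a monotone relation: for any (v₁, v₁'), (v₂, v₂') ∈ α, ⟨v₁' − v₂', v₁ − v₂⟩ ≥ 0. -/
import Mathlib


/-- **Equality sets of representative functions are monotone.** Let
`f₁, f₂ : V × V' → ℝ ∪ {+∞}` be lower semicontinuous convex functions with
`f_i(v, v') ≥ ⟨v', v⟩` everywhere.  Then the set
`α = { (v, v') : f₁(v, v') = ⟨v', v⟩ }` is a monotone relation: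
`⟨v₁' − v₂', v₁ − v₂⟩ ≥ 0` for all `(v₁, v₁'), (v₂, v₂') ∈ α`. -/
theorem equality_set_monotone
    {V : Type*} [NormedAddCommGroup V] [NormedSpace ℝ V]
    (f₁ f₂ : V × (V →L[ℝ] ℝ) → EReal)
    (hconv₁ : ∀ p q : V × (V →L[ℝ] ℝ), ∀ a b : ℝ, 0 ≤ a → 0 ≤ b → a + b = 1 →
      f₁ (a • p + b • q) ≤ (a : EReal) * f₁ p + (b : EReal) * f₁ q)
    (hlsc₁ : LowerSemicontinuous f₁)
    (hge₁ : ∀ p : V × (V →L[ℝ] ℝ), ((p.2 p.1 : ℝ) : EReal) ≤ f₁ p)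
    (hconv₂ : ∀ p q : V × (V →L[ℝ] ℝ), ∀ a b : ℝ, 0 ≤ a → 0 ≤ b → a + b = 1 →
      f₂ (a • p + b • q) ≤ (a : EReal) * f₂ p + (b : EReal) * f₂ q)
    (hlsc₂ : LowerSemicontinuous f₂)
    (hge₂ : ∀ p : V × (V →L[ℝ] ℝ), ((p.2 p.1 : ℝ) : EReal) ≤ f₂ p) :
    ∀ p q : V × (V →L[ℝ] ℝ),
      f₁ p = ((p.2 p.1 : ℝ) : EReal) → f₁ q = ((q.2 q.1 : ℝ) : EReal) →
      0 ≤ (p.2 - q.2) (p.1 - q.1) := by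
  intro p q hp hq
  have h := hconv₁ p q (1/2) (1/2) (by norm_num) (by norm_num) (by norm_num)
  rw [hp, hq, ← EReal.coe_mul, ← EReal.coe_mul, ← EReal.coe_add] at h
  have hge := hge₁ ((1/2 : ℝ) • p + (1/2 : ℝ) • q)
  have key : (((1/2 : ℝ) • p + (1/2 : ℝ) • q).2 ((1/2 : ℝ) • p + (1/2 : ℝ) • q).1 : ℝ)
      ≤ 1/2 * (p.2 p.1) + 1/2 * (q.2 q.1) := by
    exact_mod_cast hge.trans h
  simp only [Prod.smul_fst, Prod.smul_snd, Prod.fst_add, Prod.snd_add,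
    ContinuousLinearMap.add_apply, ContinuousLinearMap.smul_apply, map_add, map_smul,
    smul_eq_mul] at key
  simp only [ContinuousLinearMap.sub_apply, map_sub]
  nlinarith [key]
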